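/- For every natural number r ≥ 2, the ℂ[α,β,γ]-module K_r = J_{r−1}/(J_r + γ·J_{r−2}) is generated by the residue class of R¹_{r−1}, and this class is annihilated both by γ and by β + (−1)^r·8; consequently K_r is a cyclic module over the quotient ring ℂ[α,β,γ]/(J_r + (γ, β + (−1)^r·8)). -/

import Mathlib

open MvPolynomial

/-- The triple (R¹_r, R²_r, R³_r) of polynomials in ℂ[α,β,γ] (α = X 0, β = X 1, γ = X 2). -/
noncomputable def Rr : ℕ → MvPolynomial (Fin 3) ℂ × MvPolynomial (Fin 3) ℂ × MvPolynomial (Fin 3) ℂ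
  | 0 => (1, 0, 0)
  | (r + 1) =>
      (X 0 * (Rr r).1 + C ((r : ℂ) ^ 2) * (Rr r).2.1,
       (X 1 + C ((-1 : ℂ) ^ (r + 1) * 8)) * (Rr r).1 + C ((2 * r : ℂ) / (r + 1)) * (Rr r).2.2,
       X 2 * (Rr r).1)

/-- The ideal J_r = (R¹_r, R²_r, R³_r) ⊆ ℂ[α,β,γ]. -/
noncomputable def Jr (r : ℕ) : Ideal (MvPolynomial (Fin 3) ℂ) :=
  Ideal.span {(Rr r).1, (Rr r).2.1, (Rr r).2.2}


/-- The ideal J_r + γ·J_{r−2} ⊆ ℂ[α,β,γ]. -/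
noncomputable def Nid (r : ℕ) : Ideal (MvPolynomial (Fin 3) ℂ) :=
  Jr r ⊔ Ideal.span {X 2} * Jr (r - 2)

/-- The ℂ[α,β,γ]-module K_r = J_{r−1}/(J_r + γ·J_{r−2}), realized (since
J_r + γ·J_{r−2} ⊆ J_{r−1}) as the image of the ideal J_{r−1} in ℂ[α,β,γ]/(J_r + γ·J_{r−2}). -/
noncomputable def Kmod (r : ℕ) : Submodule (MvPolynomial (Fin 3) ℂ)
    (MvPolynomial (Fin 3) ℂ ⧸ Nid r) :=
  Submodule.restrictScalars (MvPolynomial (Fin 3) ℂ)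
    ((Jr (r - 1)).map (Ideal.Quotient.mk (Nid r)))

/-!
Modulo `J_r + γ·J_{r-2}`, each generator of `J_{r-1}` is a multiple of `R¹_{r-1}`:
`R³_{r-1} = γ·R¹_{r-2}` lies in `γ·J_{r-2}`, and `R¹_r = α·R¹_{r-1} + (r-1)²·R²_{r-1}` lies in
`J_r` with `(r-1)² ≠ 0`. The two annihilators of `R¹_{r-1}` are read off from `R³_r = γ·R¹_{r-1}`
and `R²_r = (β + (-1)^r·8)·R¹_{r-1} + (2(r-1)/r)·R³_{r-1}`.
-/

section

variable (n : ℕ)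

theorem Rr_succ_fst :
    (Rr (n + 1)).1 = X 0 * (Rr n).1 + C ((n : ℂ) ^ 2) * (Rr n).2.1 := rfl

theorem Rr_succ_snd :
    (Rr (n + 1)).2.1 = (X 1 + C ((-1 : ℂ) ^ (n + 1) * 8)) * (Rr n).1 +
      C ((2 * n : ℂ) / (n + 1)) * (Rr n).2.2 := rfl

theorem Rr_succ_thd : (Rr (n + 1)).2.2 = X 2 * (Rr n).1 := rfl

theorem Rr_fst_mem_Jr : (Rr n).1 ∈ Jr n := Ideal.subset_span (by simp)

theorem Rr_snd_mem_Jr : (Rr n).2.1 ∈ Jr n := Ideal.subset_span (by simp)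

theorem Rr_thd_mem_Jr : (Rr n).2.2 ∈ Jr n := Ideal.subset_span (by simp)

theorem Jr_le_Nid : Jr n ≤ Nid n := le_sup_left

theorem X_two_mul_mem_Nid {p : MvPolynomial (Fin 3) ℂ} (hp : p ∈ Jr (n - 2)) :
    X 2 * p ∈ Nid n :=
  Submodule.mem_sup_right (Ideal.mul_mem_mul (Ideal.mem_span_singleton_self _) hp)

theorem Rr_succ_thd_mem_Nid : (Rr (n + 1)).2.2 ∈ Nid (n + 2) := by
  rw [Rr_succ_thd]
  exact X_two_mul_mem_Nid (n + 2) (Rr_fst_mem_Jr n)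

theorem X_two_mul_Rr_fst_mem_Nid : X 2 * (Rr (n + 1)).1 ∈ Nid (n + 2) := by
  rw [← Rr_succ_thd]
  exact Jr_le_Nid _ (Rr_thd_mem_Jr _)

theorem X_one_add_mul_Rr_fst_mem_Nid :
    (X 1 + C ((-1 : ℂ) ^ (n + 2) * 8)) * (Rr (n + 1)).1 ∈ Nid (n + 2) := by
  have h : (X 1 + C ((-1 : ℂ) ^ (n + 2) * 8)) * (Rr (n + 1)).1 = (Rr (n + 2)).2.1 -
      C ((2 * (n + 1 : ℕ) : ℂ) / ((n + 1 : ℕ) + 1)) * (Rr (n + 1)).2.2 := by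
    rw [Rr_succ_snd]; ring
  rw [h]
  exact sub_mem (Jr_le_Nid _ (Rr_snd_mem_Jr _)) (Ideal.mul_mem_left _ _ (Rr_succ_thd_mem_Nid n))

theorem Rr_succ_snd_add_mem_Jr :
    (Rr (n + 1)).2.1 + C (((n + 1 : ℕ) : ℂ) ^ 2)⁻¹ * X 0 * (Rr (n + 1)).1 ∈ Jr (n + 2) := by
  have hc : C (((n + 1 : ℕ) : ℂ) ^ 2)⁻¹ * C (((n + 1 : ℕ) : ℂ) ^ 2) =
      (1 : MvPolynomial (Fin 3) ℂ) := by
    rw [← C_mul, inv_mul_cancel₀ (pow_ne_zero 2 (Nat.cast_ne_zero.mpr n.succ_ne_zero)), C_1]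
  have h : (Rr (n + 1)).2.1 + C (((n + 1 : ℕ) : ℂ) ^ 2)⁻¹ * X 0 * (Rr (n + 1)).1 =
      C (((n + 1 : ℕ) : ℂ) ^ 2)⁻¹ * (Rr (n + 2)).1 := by
    rw [Rr_succ_fst (n + 1)]
    linear_combination (-(Rr (n + 1)).2.1) * hc
  rw [h]
  exact Ideal.mul_mem_left _ _ (Rr_fst_mem_Jr _)

theorem mk_Rr_succ_snd_mem_span :
    Ideal.Quotient.mk (Nid (n + 2)) (Rr (n + 1)).2.1 ∈
      Submodule.span (MvPolynomial (Fin 3) ℂ) {Ideal.Quotient.mk (Nid (n + 2)) (Rr (n + 1)).1} := by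
  have h := Ideal.Quotient.eq_zero_iff_mem.mpr (Jr_le_Nid _ (Rr_succ_snd_add_mem_Jr n))
  rw [map_add, add_eq_zero_iff_eq_neg, ← map_neg, ← neg_mul] at h
  exact Submodule.mem_span_singleton.mpr ⟨_, (Submodule.Quotient.mk_smul _ _ _).symm.trans h.symm⟩

theorem Kmod_succ_eq_span_Rr :
    Kmod (n + 1) = Submodule.span (MvPolynomial (Fin 3) ℂ)
      (Ideal.Quotient.mk (Nid (n + 1)) '' {(Rr n).1, (Rr n).2.1, (Rr n).2.2}) := by
  rw [Kmod, Nat.add_sub_cancel, Jr, Ideal.map_span]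
  exact Submodule.restrictScalars_span _ _ Ideal.Quotient.mk_surjective _

theorem Kmod_eq_span_Rr_fst :
    Kmod (n + 2) = Submodule.span (MvPolynomial (Fin 3) ℂ)
      {Ideal.Quotient.mk (Nid (n + 2)) (Rr (n + 1)).1} := by
  rw [Kmod_succ_eq_span_Rr, Set.image_insert_eq, Set.image_insert_eq, Set.image_singleton,
    Ideal.Quotient.eq_zero_iff_mem.mpr (Rr_succ_thd_mem_Nid n)]
  refine le_antisymm (Submodule.span_le.mpr ?_) (Submodule.span_mono (by simp))
  simp only [Set.insert_subset_iff, Set.singleton_subset_iff, SetLike.mem_coe]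
  exact ⟨Submodule.mem_span_singleton_self _, mk_Rr_succ_snd_mem_span n, zero_mem _⟩

end

/-- For every r ≥ 2, the ℂ[α,β,γ]-module K_r = J_{r−1}/(J_r + γ·J_{r−2}) is generated by the
residue class of R¹_{r−1}, and this class is annihilated both by γ and by β + (−1)^r·8;
consequently K_r is a cyclic module over the quotient ring
ℂ[α,β,γ]/(J_r + (γ, β + (−1)^r·8)). -/
theorem stmt14 (r : ℕ) (hr : 2 ≤ r) :
    Kmod r = Submodule.span (MvPolynomial (Fin 3) ℂ)
        {Ideal.Quotient.mk (Nid r) (Rr (r - 1)).1} ∧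
    X 2 * (Rr (r - 1)).1 ∈ Nid r ∧
    (X 1 + C ((-1 : ℂ) ^ r * 8)) * (Rr (r - 1)).1 ∈ Nid r := by
  obtain ⟨n, rfl⟩ : ∃ n, r = n + 2 := ⟨r - 2, by omega⟩
  exact ⟨Kmod_eq_span_Rr_fst n, X_two_mul_Rr_fst_mem_Nid n, X_one_add_mul_Rr_fst_mem_Nid n⟩
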